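/- arXiv:2404.04583 — 5 statements merged into one kernel-verified Lean document; each statement's English description precedes it below -/
import Mathlib

section
/- Let F₀ determine a weak, left invariant Finsler metric on a Hilbertian H-type group M = V ⊕ W, with F₀-continuity constant C for the projections. Then every continuous, piecewise continuously differentiable curve γ : [0,1] → M satisfies ℓ_F(γ) ≥ F₀(π₁(γ(1)) − π₁(γ(0)))/C. In particular, d_F(p,q) ≥ F₀(π₁(p) − π₁(q))/C > 0 for all p, q ∈ M with π₁(p) ≠ π₁(q). -/
open scoped RealInnerProductSpace

/-- A Hilbertian H-type group: a real Hilbert space `M` with an orthogonal decomposition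
`M = V ⊕ W` into nontrivial closed subspaces, `W` finite dimensional, a continuous
skew-symmetric Lie bracket with `[M,M] ⊆ W`, `[M,W] = 0`, and the map `J` determined by
`⟪J z x, y⟫ = ⟪z, [x,y]⟫` satisfying `J_z ∘ J_z = -‖z‖² id` on `V`. -/
structure HTypeGroup (M : Type*) [NormedAddCommGroup M] [InnerProductSpace ℝ M]
    [CompleteSpace M] where
  V : Submodule ℝ M
  W : Submodule ℝ M
  V_closed : IsClosed (V : Set M)
  W_closed : IsClosed (W : Set M)
  V_nontrivial : V ≠ ⊥
  W_nontrivial : W ≠ ⊥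
  W_findim : FiniteDimensional ℝ ↥W
  orthogonal : ∀ v ∈ V, ∀ w ∈ W, ⟪v, w⟫ = 0
  proj1 : M →L[ℝ] M
  proj2 : M →L[ℝ] M
  proj1_mem : ∀ v : M, proj1 v ∈ V
  proj2_mem : ∀ v : M, proj2 v ∈ W
  proj_add : ∀ v : M, proj1 v + proj2 v = v
  bracket : M →L[ℝ] M →L[ℝ] M
  bracket_skew : ∀ u v : M, bracket u v = - bracket v u
  bracket_mem_W : ∀ u v : M, bracket u v ∈ W
  bracket_W : ∀ u : M, ∀ w ∈ W, bracket u w = 0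
  Jmap : M →L[ℝ] M →L[ℝ] M
  Jmap_mem_V : ∀ z ∈ W, ∀ x ∈ V, Jmap z x ∈ V
  Jmap_inner : ∀ z ∈ W, ∀ x ∈ V, ∀ y ∈ V, ⟪Jmap z x, y⟫ = ⟪z, bracket x y⟫
  Jmap_sq : ∀ z ∈ W, ∀ x ∈ V, Jmap z (Jmap z x) = -(‖z‖ ^ 2) • x

/-- A continuous, piecewise continuously differentiable curve on `[0,1]`: a continuous
curve together with a derivative function which is the honest derivative away from a
finite exceptional set, and which is interval integrable. -/
structure PC1Curve (M : Type*) [NormedAddCommGroup M] [NormedSpace ℝ M] where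
  toFun : ℝ → M
  deriv : ℝ → M
  continuousOn : ContinuousOn toFun (Set.Icc 0 1)
  exc : Set ℝ
  exc_finite : exc.Finite
  hasDeriv : ∀ t ∈ Set.Ioo (0 : ℝ) 1 \ exc, HasDerivAt toFun (deriv t) t
  deriv_integrable : IntervalIntegrable deriv MeasureTheory.volume 0 1

/-- The Finsler length `ℓ_F(γ) = ∫₀¹ F₀(γ'(t) - (1/2)[γ(t), γ'(t)]) dt` of a piecewise `C¹`
curve, with respect to the left invariant Finsler metric determined by the norm `F₀`. -/
noncomputable def finslerLength {M : Type*} [NormedAddCommGroup M] [InnerProductSpace ℝ M]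
    [CompleteSpace M] (H : HTypeGroup M) (F₀ : M → ℝ) (γ : PC1Curve M) : ℝ :=
  ∫ t in (0 : ℝ)..1, F₀ (γ.deriv t - (2⁻¹ : ℝ) • H.bracket (γ.toFun t) (γ.deriv t))

/-- The Finsler distance `d_F(p, q)`: the infimum of the Finsler lengths of continuous,
piecewise continuously differentiable curves joining `p` to `q`. -/
noncomputable def finslerDist {M : Type*} [NormedAddCommGroup M] [InnerProductSpace ℝ M]
    [CompleteSpace M] (H : HTypeGroup M) (F₀ : M → ℝ) (p q : M) : ℝ :=
  sInf {L : ℝ | ∃ γ : PC1Curve M, γ.toFun 0 = p ∧ γ.toFun 1 = q ∧ L = finslerLength H F₀ γ}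

/-!
The bracket takes values in `W`, which `π₁` kills, so `π₁` of the left-translated
velocity `γ' - ½[γ, γ']` is `π₁ γ'`, whose integral over `[0,1]` is `π₁ γ(1) - π₁ γ(0)`.
Jensen's inequality for the convex, continuous function `F₀` then gives
`F₀(π₁ γ(1) - π₁ γ(0)) ≤ ∫ F₀(π₁ (γ' - ½[γ, γ'])) ≤ C ℓ_F(γ)`.
-/

open MeasureTheory Set

section SeminormIntegral

variable {E : Type*} [NormedAddCommGroup E] [NormedSpace ℝ E]

theorem Seminorm.lipschitzWith_of_le_mul_norm (p : Seminorm ℝ E) {c : ℝ}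
    (hp : ∀ x, p x ≤ c * ‖x‖) : LipschitzWith c.toNNReal p :=
  LipschitzWith.of_dist_le' fun x y => by
    simpa only [dist_eq_norm, Real.norm_eq_abs] using
      (abs_sub_map_le_sub p x y).trans (hp (x - y))

theorem Seminorm.intervalIntegrable_comp (p : Seminorm ℝ E) {c : ℝ} (hp : ∀ x, p x ≤ c * ‖x‖)
    {f : ℝ → E} {a b : ℝ} (hf : IntervalIntegrable f volume a b) :
    IntervalIntegrable (fun t => p (f t)) volume a b :=
  (hf.norm.const_mul c).mono_fun'
    ((p.lipschitzWith_of_le_mul_norm hp).continuous.comp_aestronglyMeasurable hf.def'.1)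
    (ae_of_all _ fun t => by
      simpa only [Real.norm_eq_abs, abs_of_nonneg (apply_nonneg p _)] using hp (f t))

variable [CompleteSpace E]

theorem Seminorm.map_integral_le_integral {α : Type*} [MeasurableSpace α] {μ : Measure α}
    [IsProbabilityMeasure μ] (p : Seminorm ℝ E) (hp : Continuous p) {f : α → E}
    (hf : Integrable f μ) (hpf : Integrable (fun a => p (f a)) μ) :
    p (∫ a, f a ∂μ) ≤ ∫ a, p (f a) ∂μ :=
  p.convexOn.map_integral_le hp.continuousOn isClosed_univ (ae_of_all _ fun _ => mem_univ _) hf hpf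

theorem Seminorm.map_intervalIntegral_le_intervalIntegral (p : Seminorm ℝ E) {c : ℝ}
    (hp : ∀ x, p x ≤ c * ‖x‖) {f : ℝ → E} (hf : IntervalIntegrable f volume 0 1) :
    p (∫ t in (0 : ℝ)..1, f t) ≤ ∫ t in (0 : ℝ)..1, p (f t) := by
  have : IsProbabilityMeasure (volume.restrict (Ioc (0 : ℝ) 1)) := ⟨by simp⟩
  simp only [intervalIntegral.integral_of_le zero_le_one]
  exact p.map_integral_le_integral (p.lipschitzWith_of_le_mul_norm hp).continuous
    hf.1 (p.intervalIntegrable_comp hp hf).1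

end SeminormIntegral

theorem IntervalIntegrable.continuousOn_bilin {E F G : Type*} [NormedAddCommGroup E]
    [NormedSpace ℝ E] [NormedAddCommGroup F] [NormedSpace ℝ F] [NormedAddCommGroup G]
    [NormedSpace ℝ G] (B : E →L[ℝ] F →L[ℝ] G) {f : ℝ → E} {g : ℝ → F} {a b : ℝ}
    (hf : ContinuousOn f (uIcc a b)) (hg : IntervalIntegrable g volume a b) :
    IntervalIntegrable (fun t => B (f t) (g t)) volume a b := by
  obtain ⟨K, hK⟩ := isCompact_uIcc.exists_bound_of_continuousOn hf
  refine (hg.norm.const_mul (‖B‖ * K)).mono_fun'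
    (B.aestronglyMeasurable_comp₂
      ((hf.mono uIoc_subset_uIcc).aestronglyMeasurable measurableSet_uIoc) hg.def'.1) ?_
  refine ae_restrict_of_forall_mem measurableSet_uIoc fun t ht => ?_
  calc ‖B (f t) (g t)‖ ≤ ‖B‖ * ‖f t‖ * ‖g t‖ := B.le_opNorm₂ _ _
    _ ≤ ‖B‖ * K * ‖g t‖ := by
      gcongr
      exact hK t (uIoc_subset_uIcc ht)

namespace PC1Curve

variable {M : Type*} [NormedAddCommGroup M] [NormedSpace ℝ M]

theorem integral_deriv [CompleteSpace M] (γ : PC1Curve M) :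
    ∫ t in (0 : ℝ)..1, γ.deriv t = γ.toFun 1 - γ.toFun 0 :=
  integral_eq_of_hasDerivAt_off_countable_of_le γ.toFun γ.deriv zero_le_one
    γ.exc_finite.countable γ.continuousOn γ.hasDeriv γ.deriv_integrable

def segment (p q : M) : PC1Curve M where
  toFun t := p + t • (q - p)
  deriv _ := q - p
  continuousOn := (continuous_const.add (continuous_id.smul continuous_const)).continuousOn
  exc := ∅
  exc_finite := finite_empty
  hasDeriv t _ := by simpa using ((hasDerivAt_id t).smul_const (q - p)).const_add p
  deriv_integrable := intervalIntegrable_const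

@[simp]
theorem segment_zero (p q : M) : (segment p q).toFun 0 = p := by simp [segment]

@[simp]
theorem segment_one (p q : M) : (segment p q).toFun 1 = q := by simp [segment]

end PC1Curve

namespace HTypeGroup

variable {M : Type*} [NormedAddCommGroup M] [InnerProductSpace ℝ M] [CompleteSpace M]
  (H : HTypeGroup M)

theorem proj1_eq_zero_of_mem_W {w : M} (hw : w ∈ H.W) : H.proj1 w = 0 := by
  have hV : H.proj1 w ∈ H.V := H.proj1_mem w
  have hW : H.proj1 w ∈ H.W := by
    rw [eq_sub_of_add_eq (H.proj_add w)]
    exact H.W.sub_mem hw (H.proj2_mem w)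
  exact inner_self_eq_zero.mp (H.orthogonal _ hV _ hW)

theorem proj1_bracket (u v : M) : H.proj1 (H.bracket u v) = 0 :=
  H.proj1_eq_zero_of_mem_W (H.bracket_mem_W u v)

/-- With the group law `p * q = p + q + ½ [p, q]`, this is the velocity of `γ` at `t` moved
to the identity by the left translation by `(γ t)⁻¹ = -γ t`. -/
noncomputable def leftTranslatedDeriv (γ : PC1Curve M) (t : ℝ) : M :=
  γ.deriv t - (2⁻¹ : ℝ) • H.bracket (γ.toFun t) (γ.deriv t)

theorem proj1_leftTranslatedDeriv (γ : PC1Curve M) (t : ℝ) :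
    H.proj1 (H.leftTranslatedDeriv γ t) = H.proj1 (γ.deriv t) := by
  simp [leftTranslatedDeriv, proj1_bracket]

theorem intervalIntegrable_leftTranslatedDeriv (γ : PC1Curve M) :
    IntervalIntegrable (H.leftTranslatedDeriv γ) volume 0 1 :=
  γ.deriv_integrable.sub
    ((γ.deriv_integrable.continuousOn_bilin H.bracket
      (by simpa [uIcc_of_le zero_le_one] using γ.continuousOn)).smul (2⁻¹ : ℝ))

theorem proj1_sub_le_mul_finslerLength (p : Seminorm ℝ M) {c : ℝ} (hp : ∀ x, p x ≤ c * ‖x‖)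
    {C : ℝ} (hproj : ∀ x, p (H.proj1 x) ≤ C * p x) (γ : PC1Curve M) :
    p (H.proj1 (γ.toFun 1) - H.proj1 (γ.toFun 0)) ≤ C * finslerLength H p γ := by
  have hξ := H.intervalIntegrable_leftTranslatedDeriv γ
  have hproj1ξ :
      IntervalIntegrable (fun t => H.proj1 (H.leftTranslatedDeriv γ t)) volume 0 1 :=
    ⟨H.proj1.integrable_comp hξ.1, H.proj1.integrable_comp hξ.2⟩
  calc p (H.proj1 (γ.toFun 1) - H.proj1 (γ.toFun 0))
      = p (∫ t in (0 : ℝ)..1, H.proj1 (H.leftTranslatedDeriv γ t)) := by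
        simp only [proj1_leftTranslatedDeriv,
          H.proj1.intervalIntegral_comp_comm γ.deriv_integrable, γ.integral_deriv, map_sub]
    _ ≤ ∫ t in (0 : ℝ)..1, p (H.proj1 (H.leftTranslatedDeriv γ t)) :=
        p.map_intervalIntegral_le_intervalIntegral hp hproj1ξ
    _ ≤ ∫ t in (0 : ℝ)..1, C * p (H.leftTranslatedDeriv γ t) :=
        intervalIntegral.integral_mono_on zero_le_one (p.intervalIntegrable_comp hp hproj1ξ)
          ((p.intervalIntegrable_comp hp hξ).const_mul C) fun t _ => hproj _
    _ = C * finslerLength H p γ := intervalIntegral.integral_const_mul _ _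

end HTypeGroup

theorem le_finslerDist {M : Type*} [NormedAddCommGroup M] [InnerProductSpace ℝ M]
    [CompleteSpace M] (H : HTypeGroup M) (F₀ : M → ℝ) {p q : M} {L : ℝ}
    (hL : ∀ γ : PC1Curve M, γ.toFun 0 = p → γ.toFun 1 = q → L ≤ finslerLength H F₀ γ) :
    L ≤ finslerDist H F₀ p q :=
  le_csInf ⟨_, PC1Curve.segment p q, by simp, by simp, rfl⟩ fun _ ⟨γ, h0, h1, hγ⟩ =>
    hγ ▸ hL γ h0 h1

theorem statement_7_general {M : Type*} [NormedAddCommGroup M] [InnerProductSpace ℝ M]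
    [CompleteSpace M] (H : HTypeGroup M) (F₀ : M → ℝ)
    (hF_add : ∀ u v : M, F₀ (u + v) ≤ F₀ u + F₀ v)
    (hF_smul : ∀ (c : ℝ) (v : M), F₀ (c • v) = |c| * F₀ v)
    (hF_def : ∀ v : M, F₀ v = 0 → v = 0)
    (c₁ : ℝ) (hF_cont : ∀ v : M, F₀ v ≤ c₁ * ‖v‖)
    (C : ℝ) (hC : 0 < C)
    (hF_proj : ∀ v : M, F₀ (H.proj1 v) ≤ C * F₀ v ∧ F₀ (H.proj2 v) ≤ C * F₀ v) :
    (∀ γ : PC1Curve M,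
        F₀ (H.proj1 (γ.toFun 1) - H.proj1 (γ.toFun 0)) / C ≤ finslerLength H F₀ γ) ∧
    (∀ p q : M, H.proj1 p ≠ H.proj1 q →
        0 < F₀ (H.proj1 p - H.proj1 q) / C ∧
        F₀ (H.proj1 p - H.proj1 q) / C ≤ finslerDist H F₀ p q) := by
  let N : Seminorm ℝ M := Seminorm.of F₀ hF_add fun c v => hF_smul c v
  have key (γ : PC1Curve M) :
      F₀ (H.proj1 (γ.toFun 1) - H.proj1 (γ.toFun 0)) / C ≤ finslerLength H F₀ γ :=
    (div_le_iff₀' hC).2 <| H.proj1_sub_le_mul_finslerLength N hF_cont (fun v => (hF_proj v).1) γ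
  refine ⟨key, fun p q hpq => ⟨?_, le_finslerDist H F₀ fun γ h0 h1 => ?_⟩⟩
  · refine div_pos ((apply_nonneg N _).lt_of_ne fun h => ?_) hC
    exact sub_ne_zero.2 hpq (hF_def _ h.symm)
  · have hrev : F₀ (H.proj1 p - H.proj1 q) = F₀ (H.proj1 q - H.proj1 p) :=
      map_sub_rev N _ _
    simpa only [hrev, h0, h1] using key γ

/-- For a weak, left invariant Finsler metric `F₀` on a Hilbertian H-type
group `M = V ⊕ W` with projection-continuity constant `C`, every continuous, piecewise
continuously differentiable curve `γ : [0,1] → M` satisfies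
`ℓ_F(γ) ≥ F₀(π₁(γ(1)) − π₁(γ(0)))/C`; in particular `d_F(p,q) ≥ F₀(π₁(p) − π₁(q))/C > 0`
whenever `π₁(p) ≠ π₁(q)`. -/
theorem statement_7 {M : Type*} [NormedAddCommGroup M] [InnerProductSpace ℝ M]
    [CompleteSpace M] (H : HTypeGroup M) (F₀ : M → ℝ)
    (hF_add : ∀ u v : M, F₀ (u + v) ≤ F₀ u + F₀ v)
    (hF_smul : ∀ (c : ℝ) (v : M), F₀ (c • v) = |c| * F₀ v)
    (hF_def : ∀ v : M, F₀ v = 0 → v = 0)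
    (c₁ : ℝ) (hc₁ : 0 < c₁) (hF_cont : ∀ v : M, F₀ v ≤ c₁ * ‖v‖)
    (C : ℝ) (hC : 0 < C)
    (hF_proj : ∀ v : M, F₀ (H.proj1 v) ≤ C * F₀ v ∧ F₀ (H.proj2 v) ≤ C * F₀ v) :
    (∀ γ : PC1Curve M,
        F₀ (H.proj1 (γ.toFun 1) - H.proj1 (γ.toFun 0)) / C ≤ finslerLength H F₀ γ) ∧
    (∀ p q : M, H.proj1 p ≠ H.proj1 q →
        0 < F₀ (H.proj1 p - H.proj1 q) / C ∧
        F₀ (H.proj1 p - H.proj1 q) / C ≤ finslerDist H F₀ p q) :=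
  statement_7_general H F₀ hF_add hF_smul hF_def c₁ hF_cont C hC hF_proj
end

section
/- Let σ₀ determine a weak, graded Riemannian metric on a Hilbertian H-type group M = V ⊕ W, with associated operator A. Let x = x₁ + x₂ and y = y₁ + y₂ be elements of M with x₁, y₁ ∈ V and x₂, y₂ ∈ W. Then there exists a vector b ∈ M satisfying σ₀(w, b) = σ₀([x, w], y) for all w ∈ M if and only if J_{A y₂} x₁ ∈ A(V); moreover, in that case A b = J_{A y₂} x₁. -/
open scoped RealInnerProductSpace

/-- Let `σ₀` determine a weak, graded Riemannian metric on a Hilbertian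
H-type group `M = V ⊕ W` with associated operator `A`. For `x = x₁ + x₂`, `y = y₁ + y₂`
(`x₁, y₁ ∈ V`, `x₂, y₂ ∈ W`), a B-adjoint vector `b` with `σ₀(w, b) = σ₀([x, w], y)` for
all `w ∈ M` exists if and only if `J_{A y₂} x₁ ∈ A(V)`; in that case `A b = J_{A y₂} x₁`. -/
theorem statement_15 {M : Type*} [NormedAddCommGroup M] [InnerProductSpace ℝ M]
    [CompleteSpace M] (H : HTypeGroup M) (σ : M → M → ℝ)
    (h_symm : ∀ v w : M, σ v w = σ w v)
    (h_posdef : ∀ v : M, v ≠ 0 → 0 < σ v v)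
    (c₀ : ℝ) (hc₀ : 0 < c₀)
    (h_cont : ∀ v : M, Real.sqrt (σ v v) ≤ c₀ * ‖v‖)
    (h_graded : ∀ v ∈ H.V, ∀ w ∈ H.W, σ v w = 0)
    (A : M →L[ℝ] M) (hA : ∀ v w : M, σ v w = ⟪v, A w⟫)
    (hAV : ∀ v ∈ H.V, A v ∈ H.V) (hAW : ∀ w ∈ H.W, A w ∈ H.W) :
    ∀ x₁ ∈ H.V, ∀ x₂ ∈ H.W, ∀ y₁ ∈ H.V, ∀ y₂ ∈ H.W,
      ((∃ b : M, ∀ w : M, σ w b = σ (H.bracket (x₁ + x₂) w) (y₁ + y₂)) ↔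
        ∃ v ∈ H.V, A v = H.Jmap (A y₂) x₁) ∧
      (∀ b : M, (∀ w : M, σ w b = σ (H.bracket (x₁ + x₂) w) (y₁ + y₂)) →
        A b = H.Jmap (A y₂) x₁) := by
  intro x₁ hx₁ x₂ hx₂ y₁ hy₁ y₂ hy₂
  set z := A y₂ with hzdef
  have hz : z ∈ H.W := hAW y₂ hy₂
  set j := H.Jmap z x₁ with hjdef
  have hj : j ∈ H.V := H.Jmap_mem_V z hz x₁ hx₁
  -- key computation
  have key : ∀ w : M, σ (H.bracket (x₁ + x₂) w) (y₁ + y₂) = ⟪w, j⟫ := by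
    intro w
    have hb2 : H.bracket x₂ w = 0 := by
      rw [H.bracket_skew, H.bracket_W w x₂ hx₂]; simp
    have hbr : H.bracket (x₁ + x₂) w = H.bracket x₁ (H.proj1 w) := by
      have h1 : H.bracket x₁ (H.proj2 w) = 0 := H.bracket_W x₁ _ (H.proj2_mem w)
      calc H.bracket (x₁ + x₂) w = H.bracket x₁ w + H.bracket x₂ w := by
            rw [map_add]; rfl
        _ = H.bracket x₁ (H.proj1 w + H.proj2 w) := by rw [hb2, add_zero, H.proj_add]
        _ = H.bracket x₁ (H.proj1 w) := by rw [map_add, h1, add_zero]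
    have hBW : H.bracket x₁ (H.proj1 w) ∈ H.W := H.bracket_mem_W _ _
    have h1 : ⟪H.bracket x₁ (H.proj1 w), A y₁⟫ = (0:ℝ) := by
      rw [real_inner_comm]; exact H.orthogonal _ (hAV y₁ hy₁) _ hBW
    have h2 : ⟪j, w⟫ = ⟪w, j⟫ := real_inner_comm _ _
    calc σ (H.bracket (x₁ + x₂) w) (y₁ + y₂)
        = ⟪H.bracket x₁ (H.proj1 w), A (y₁ + y₂)⟫ := by rw [hA, hbr]
      _ = ⟪H.bracket x₁ (H.proj1 w), A y₁⟫ + ⟪H.bracket x₁ (H.proj1 w), z⟫ := by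
            rw [map_add, inner_add_right]
      _ = ⟪z, H.bracket x₁ (H.proj1 w)⟫ := by rw [h1, zero_add, real_inner_comm]
      _ = ⟪j, H.proj1 w⟫ := (H.Jmap_inner z hz x₁ hx₁ _ (H.proj1_mem w)).symm
      _ = ⟪j, H.proj1 w⟫ + ⟪j, H.proj2 w⟫ := by
            rw [H.orthogonal j hj _ (H.proj2_mem w), add_zero]
      _ = ⟪j, w⟫ := by rw [← inner_add_right, H.proj_add]
      _ = ⟪w, j⟫ := h2
  have part2 : ∀ b : M, (∀ w : M, σ w b = σ (H.bracket (x₁ + x₂) w) (y₁ + y₂)) →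
      A b = j := by
    intro b hb
    refine ext_inner_left ℝ fun w => ?_
    rw [← hA, hb w, key w]
  refine ⟨⟨fun ⟨b, hb⟩ => ?_, fun ⟨v, hv, hAv⟩ => ⟨v, fun w => ?_⟩⟩, part2⟩
  · have hAb : A b = j := part2 b hb
    refine ⟨H.proj1 b, H.proj1_mem b, ?_⟩
    have hsplit : A (H.proj1 b) + A (H.proj2 b) = j := by
      rw [← map_add, H.proj_add, hAb]
    have hmemV : A (H.proj2 b) ∈ H.V := by
      have : A (H.proj2 b) = j - A (H.proj1 b) := by
        rw [← hsplit]; abel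
      rw [this]; exact H.V.sub_mem hj (hAV _ (H.proj1_mem b))
    have hmemW : A (H.proj2 b) ∈ H.W := hAW _ (H.proj2_mem b)
    have hzero : A (H.proj2 b) = 0 := by
      have := H.orthogonal _ hmemV _ hmemW
      exact inner_self_eq_zero.mp this
    rw [hzero, add_zero] at hsplit
    exact hsplit
  · rw [hA, hAv, key w]
end

section
/- Let σ₀ determine a weak, graded Riemannian metric on a Hilbertian H-type group M = V ⊕ W, with associated operator A. Then for every z ∈ W, x ∈ V and w ∈ M one has σ₀([J_{Az}(Ax), w], z) = −|Az|² σ₀(w, x); equivalently, the B-adjoint vector B_{σ₀}(z, J_{Az}(Ax)) exists and equals −|Az|² x. -/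
open scoped RealInnerProductSpace

/-- Let `σ₀` determine a weak, graded Riemannian metric on a Hilbertian
H-type group `M = V ⊕ W` with associated operator `A`. Then for every `z ∈ W`, `x ∈ V`
and `w ∈ M` one has `σ₀([J_{Az}(Ax), w], z) = −‖Az‖² σ₀(w, x)`; equivalently, the
B-adjoint vector `B_{σ₀}(z, J_{Az}(Ax))` exists and equals `−‖Az‖² x`. -/
theorem statement_16 {M : Type*} [NormedAddCommGroup M] [InnerProductSpace ℝ M]
    [CompleteSpace M] (H : HTypeGroup M) (σ : M → M → ℝ)
    (h_symm : ∀ v w : M, σ v w = σ w v)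
    (h_posdef : ∀ v : M, v ≠ 0 → 0 < σ v v)
    (c₀ : ℝ) (hc₀ : 0 < c₀)
    (h_cont : ∀ v : M, Real.sqrt (σ v v) ≤ c₀ * ‖v‖)
    (h_graded : ∀ v ∈ H.V, ∀ w ∈ H.W, σ v w = 0)
    (A : M →L[ℝ] M) (hA : ∀ v w : M, σ v w = ⟪v, A w⟫)
    (hAV : ∀ v ∈ H.V, A v ∈ H.V) (hAW : ∀ w ∈ H.W, A w ∈ H.W) :
    ∀ z ∈ H.W, ∀ x ∈ H.V, ∀ w : M,
      σ (H.bracket (H.Jmap (A z) (A x)) w) z = -(‖A z‖ ^ 2) * σ w x ∧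
      σ w ((-(‖A z‖ ^ 2) : ℝ) • x) = σ (H.bracket (H.Jmap (A z) (A x)) w) z := by

  intro z hz x hx w
  have hAz : A z ∈ H.W := hAW z hz
  have hAx : A x ∈ H.V := hAV x hx
  have hJ : H.Jmap (A z) (A x) ∈ H.V := H.Jmap_mem_V _ hAz _ hAx
  have hw1 := H.proj1_mem w
  have hw2 := H.proj2_mem w
  have hw : H.proj1 w + H.proj2 w = w := H.proj_add w
  have hb2 : H.bracket (H.Jmap (A z) (A x)) (H.proj2 w) = 0 :=
    H.bracket_W _ _ hw2
  have key : σ (H.bracket (H.Jmap (A z) (A x)) w) z =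
      -(‖A z‖ ^ 2) * σ w x := by
    have hbw : H.bracket (H.Jmap (A z) (A x)) w
        = H.bracket (H.Jmap (A z) (A x)) (H.proj1 w) := by
      conv_lhs => rw [← hw]
      rw [map_add, hb2, add_zero]
    have h1 : σ (H.bracket (H.Jmap (A z) (A x)) w) z
        = ⟪A z, H.bracket (H.Jmap (A z) (A x)) (H.proj1 w)⟫ := by
      rw [hA, real_inner_comm, hbw]
    rw [h1, ← H.Jmap_inner _ hAz _ hJ _ hw1, H.Jmap_sq _ hAz _ hAx,
      real_inner_smul_left]
    have h2 : σ w x = ⟪A x, H.proj1 w⟫ := by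
      rw [hA]
      conv_lhs => rw [← hw]
      rw [inner_add_left, real_inner_comm (A x) (H.proj2 w),
        H.orthogonal _ hAx _ hw2, add_zero, real_inner_comm]
    rw [h2]
  refine ⟨key, ?_⟩
  rw [hA, map_smul, real_inner_smul_right, ← hA, key]
end

section
/- Let σ₀ determine a strictly weak, graded Riemannian metric on a Hilbertian H-type group M = V ⊕ W, with associated operator A. Then there exists a sequence (w_n) with w_n ∈ A(V) ⊆ V, |w_n| = 1 for all n, and ‖w_n‖_{σ₀} → 0 as n → ∞. -/
open scoped RealInnerProductSpace

set_option maxHeartbeats 1000000 in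
/-- Let `σ₀` determine a strictly weak, graded Riemannian metric on a
Hilbertian H-type group `M = V ⊕ W`, with associated operator `A`. Then there is a
sequence `(w_n)` with `w_n ∈ A(V) ⊆ V`, `‖w_n‖ = 1`, and `‖w_n‖_{σ₀} → 0`. -/
theorem statement_17 {M : Type*} [NormedAddCommGroup M] [InnerProductSpace ℝ M]
    [CompleteSpace M] (H : HTypeGroup M) (σ : M → M → ℝ)
    (h_symm : ∀ v w : M, σ v w = σ w v)
    (h_posdef : ∀ v : M, v ≠ 0 → 0 < σ v v)
    (c₀ : ℝ) (hc₀ : 0 < c₀)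
    (h_cont : ∀ v : M, Real.sqrt (σ v v) ≤ c₀ * ‖v‖)
    (h_graded : ∀ v ∈ H.V, ∀ w ∈ H.W, σ v w = 0)
    (A : M →L[ℝ] M) (hA : ∀ v w : M, σ v w = ⟪v, A w⟫)
    (hAV : ∀ v ∈ H.V, A v ∈ H.V) (hAW : ∀ w ∈ H.W, A w ∈ H.W)
    (h_strictly_weak : ¬ ∃ c > (0 : ℝ), ∀ v : M, c * ‖v‖ ≤ Real.sqrt (σ v v)) :
    ∃ w : ℕ → M, (∀ n, (∃ v ∈ H.V, A v = w n) ∧ w n ∈ H.V ∧ ‖w n‖ = 1) ∧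
      Filter.Tendsto (fun n => Real.sqrt (σ (w n) (w n))) Filter.atTop (nhds 0) := by
  classical
  have hσnn : ∀ v : M, 0 ≤ σ v v := by
    intro v
    rcases eq_or_ne v 0 with h | h
    · rw [h, hA]; simp
    · exact (h_posdef v h).le
  have hσ_smul : ∀ (t : ℝ) (v : M), σ (t • v) (t • v) = t ^ 2 * σ v v := by
    intro t v
    rw [hA, hA, map_smul, real_inner_smul_left, real_inner_smul_right]; ring
  have hσ_add : ∀ a b : M, σ (a + b) (a + b) = σ a a + σ a b + σ b a + σ b b := by
    intro a b
    simp only [hA, map_add, inner_add_left, inner_add_right]; ring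
  -- Step (a): coercivity of σ on W
  obtain ⟨c, hc, hcW⟩ : ∃ c > (0:ℝ), ∀ w ∈ H.W, c * ‖w‖ ^ 2 ≤ σ w w := by
    haveI := H.W_findim
    obtain ⟨w₀, hw₀W, hw₀⟩ := Submodule.exists_mem_ne_zero_of_ne_bot H.W_nontrivial
    have hw₀'ne : (⟨w₀, hw₀W⟩ : ↥H.W) ≠ 0 := by
      simp only [ne_eq, Submodule.mk_eq_zero]; exact hw₀
    have hsph : (Metric.sphere (0 : ↥H.W) 1).Nonempty := by
      refine ⟨(‖(⟨w₀, hw₀W⟩ : ↥H.W)‖ : ℝ)⁻¹ • ⟨w₀, hw₀W⟩, ?_⟩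
      simp only [Metric.mem_sphere, dist_zero_right]
      rw [norm_smul]
      have : ‖(⟨w₀, hw₀W⟩ : ↥H.W)‖ ≠ 0 := norm_ne_zero_iff.2 hw₀'ne
      simp only [Real.norm_eq_abs, abs_of_nonneg (inv_nonneg.2 (norm_nonneg _))]
      exact inv_mul_cancel₀ (norm_ne_zero_iff.2 hw₀'ne)
    have hcont : Continuous fun w : ↥H.W => σ (w : M) (w : M) := by
      have heq : (fun w : ↥H.W => σ (w : M) (w : M))
          = fun w : ↥H.W => ⟪(w : M), A (w : M)⟫ := by
        funext w; rw [hA]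
      rw [heq]
      exact continuous_subtype_val.inner (A.continuous.comp continuous_subtype_val)
    obtain ⟨z, hz, hzmin⟩ :=
      (isCompact_sphere (0 : ↥H.W) 1).exists_isMinOn hsph hcont.continuousOn
    have hz1 : ‖z‖ = 1 := by simpa using hz
    have hzne : (z : M) ≠ 0 := by
      intro h
      have hz0 : z = 0 := Subtype.ext h
      rw [hz0] at hz1; simp at hz1
    refine ⟨σ (z : M) (z : M), h_posdef _ hzne, ?_⟩
    intro w hw
    rcases eq_or_ne w 0 with rfl | hwne
    · simpa using hσnn 0
    · have hnw : (0:ℝ) < ‖w‖ := norm_pos_iff.2 hwne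
      have hsne : (⟨w, hw⟩ : ↥H.W) ≠ 0 := by
        simp only [ne_eq, Submodule.mk_eq_zero]; exact hwne
      have hnorm_coe : ‖(⟨w, hw⟩ : ↥H.W)‖ = ‖w‖ := rfl
      have hssph : (‖w‖⁻¹ • (⟨w, hw⟩ : ↥H.W)) ∈ Metric.sphere (0 : ↥H.W) 1 := by
        simp only [Metric.mem_sphere, dist_zero_right]
        rw [norm_smul, hnorm_coe, Real.norm_eq_abs, abs_of_nonneg (inv_nonneg.2 (norm_nonneg w)),
          inv_mul_cancel₀ hnw.ne']
      have hmin : σ (z : M) (z : M) ≤ σ (‖w‖⁻¹ • w) (‖w‖⁻¹ • w) := hzmin hssph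
      rw [hσ_smul] at hmin
      have h4 : ‖w‖⁻¹ ^ 2 * σ w w * ‖w‖ ^ 2 = σ w w := by
        field_simp
      have h5 := mul_le_mul_of_nonneg_right hmin (sq_nonneg ‖w‖)
      linarith
  -- Step (b): density of A(V) in V
  have hdense : ∀ x ∈ H.V, ∀ δ : ℝ, 0 < δ → ∃ v ∈ H.V, ‖A v - x‖ < δ := by
    intro x hx δ hδ
    set K := (H.V.map (A : M →ₗ[ℝ] M)).topologicalClosure with hK
    haveI : CompleteSpace K :=
      (H.V.map (A : M →ₗ[ℝ] M)).isClosed_topologicalClosure.completeSpace_coe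
    obtain ⟨p, hp, q, hq, hxpq⟩ := K.exists_add_mem_mem_orthogonal x
    have hKV : K ≤ H.V := by
      apply Submodule.topologicalClosure_minimal _ _ H.V_closed
      rintro y ⟨v, hv, rfl⟩
      exact hAV v hv
    have hqV : q ∈ H.V := by
      have hqe : q = x - p := by rw [hxpq]; abel
      rw [hqe]; exact H.V.sub_mem hx (hKV hp)
    have hAq : A q ∈ K :=
      Submodule.le_topologicalClosure _ ⟨q, hqV, rfl⟩
    have hq0 : σ q q = 0 := by
      rw [hA, real_inner_comm]
      exact (Submodule.mem_orthogonal _ _).1 hq (A q) hAq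
    have hqz : q = 0 := by
      by_contra h
      exact absurd hq0 (ne_of_gt (h_posdef q h))
    have hxK : x ∈ K := by rw [hxpq, hqz, add_zero]; exact hp
    have hxcl : x ∈ closure ((H.V.map (A : M →ₗ[ℝ] M) : Set M)) := by
      rw [← Submodule.topologicalClosure_coe]; exact hxK
    obtain ⟨y, hy, hdist⟩ := Metric.mem_closure_iff.1 hxcl δ hδ
    obtain ⟨v, hv, rfl⟩ := hy
    exact ⟨v, hv, by rw [← dist_eq_norm, dist_comm]; exact hdist⟩
  -- Step (c): strict weakness gives small unit vectors
  have hweak : ∀ ε : ℝ, 0 < ε → ∃ u : M, ‖u‖ = 1 ∧ Real.sqrt (σ u u) < ε := by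
    intro ε hε
    push_neg at h_strictly_weak
    obtain ⟨v, hv⟩ := h_strictly_weak ε hε
    have hvne : v ≠ 0 := by
      intro h
      rw [h] at hv
      simp at hv
      exact absurd hv (not_lt.2 (Real.sqrt_nonneg _))
    have hnv : (0:ℝ) < ‖v‖ := norm_pos_iff.2 hvne
    refine ⟨‖v‖⁻¹ • v, ?_, ?_⟩
    · rw [norm_smul, Real.norm_eq_abs, abs_of_nonneg (inv_nonneg.2 (norm_nonneg v)),
        inv_mul_cancel₀ hnv.ne']
    · rw [hσ_smul, Real.sqrt_mul (sq_nonneg _), Real.sqrt_sq (inv_nonneg.2 (norm_nonneg v))]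
      rw [inv_mul_lt_iff₀ hnv]
      linarith
  -- Key lemma
  have key : ∀ ε : ℝ, 0 < ε → ∃ x : M,
      (∃ v ∈ H.V, A v = x) ∧ x ∈ H.V ∧ ‖x‖ = 1 ∧ Real.sqrt (σ x x) < ε := by
    intro ε hε
    set δ : ℝ := min (Real.sqrt c / 2) (ε / 8) with hδdef
    have hδ : 0 < δ := lt_min (by positivity) (by positivity)
    obtain ⟨u, hu1, huσ⟩ := hweak δ hδ
    have huσ2 : σ u u < δ ^ 2 := by
      have hs := Real.sq_sqrt (hσnn u)
      nlinarith [Real.sqrt_nonneg (σ u u)]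
    set u₁ := H.proj1 u with hu₁def
    set u₂ := H.proj2 u with hu₂def
    have hsplit : σ u u = σ u₁ u₁ + σ u₂ u₂ := by
      have h12 : σ u₁ u₂ = 0 := h_graded u₁ (H.proj1_mem u) u₂ (H.proj2_mem u)
      have h21 : σ u₂ u₁ = 0 := by rw [h_symm]; exact h12
      have hexp := hσ_add u₁ u₂
      rw [H.proj_add u] at hexp
      rw [hexp, h12, h21]; ring
    have h2σ : σ u₂ u₂ < δ ^ 2 := by nlinarith [hσnn u₁]
    have h1σ : σ u₁ u₁ < δ ^ 2 := by nlinarith [hσnn u₂]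
    have hδc : δ ^ 2 ≤ c / 4 := by
      have h2 : δ ≤ Real.sqrt c / 2 := min_le_left _ _
      have h3 := Real.sq_sqrt hc.le
      nlinarith [Real.sqrt_nonneg c, hδ.le]
    have hu₂n : ‖u₂‖ < 1 / 2 := by
      have h1 := hcW u₂ (H.proj2_mem u)
      have hsq : ‖u₂‖ ^ 2 < (1/2 : ℝ) ^ 2 := by
        have h2 : c * ‖u₂‖ ^ 2 < c * (1/2 : ℝ) ^ 2 := by nlinarith
        exact (mul_lt_mul_iff_right₀ hc).1 h2
      exact lt_of_pow_lt_pow_left₀ 2 (by norm_num) hsq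
    have hu₁eq : u₁ = u - u₂ := eq_sub_of_add_eq (H.proj_add u)
    have hu₁low : 1 / 2 < ‖u₁‖ := by
      rw [hu₁eq]
      have := norm_sub_norm_le u u₂
      linarith
    have hu₁hi : ‖u₁‖ ≤ 2 := by
      rw [hu₁eq]
      have := norm_sub_le u u₂
      linarith
    set δ' : ℝ := min (1/4) (ε ^ 2 / (160 * (‖A‖ + 1))) with hδ'def
    have hδ' : 0 < δ' := lt_min (by norm_num) (by positivity)
    have hδ'4 : δ' ≤ 1/4 := min_le_left _ _
    have hδ'A : δ' ≤ ε ^ 2 / (160 * (‖A‖ + 1)) := min_le_right _ _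
    obtain ⟨v, hvV, hvd⟩ := hdense u₁ (H.proj1_mem u) δ' hδ'
    set y := A v with hy
    set d := y - u₁ with hd
    have hdn : ‖d‖ < δ' := hvd
    have hyn : 1/4 < ‖y‖ := by
      have hueq : u₁ = y - d := by rw [hd]; abel
      have h1 : ‖u₁‖ ≤ ‖y‖ + ‖d‖ := by rw [hueq]; exact norm_sub_le _ _
      linarith
    have hyne : y ≠ 0 := by
      intro h
      rw [h, norm_zero] at hyn
      linarith
    have hAnn : (0:ℝ) ≤ ‖A‖ := norm_nonneg _
    have hcross : σ u₁ d ≤ 2 * (‖A‖ * ‖d‖) := by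
      rw [hA]
      calc ⟪u₁, A d⟫ ≤ ‖u₁‖ * ‖A d‖ := real_inner_le_norm _ _
        _ ≤ 2 * (‖A‖ * ‖d‖) := by
            have h1 := A.le_opNorm d
            nlinarith [norm_nonneg (A d), norm_nonneg d]
    have hdd : σ d d ≤ ‖A‖ * ‖d‖ * ‖d‖ := by
      rw [hA]
      calc ⟪d, A d⟫ ≤ ‖d‖ * ‖A d‖ := real_inner_le_norm _ _
        _ ≤ ‖A‖ * ‖d‖ * ‖d‖ := by
            have h1 := A.le_opNorm d
            nlinarith [norm_nonneg d]
    have hσy : σ y y < ε ^ 2 / 16 := by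
      have hyeq : y = u₁ + d := by rw [hd]; abel
      have hexp := hσ_add u₁ d
      have hdu : σ d u₁ = σ u₁ d := h_symm d u₁
      have hδε : δ ≤ ε / 8 := min_le_right _ _
      have hd1 : ‖d‖ ≤ 1 := by linarith
      have h5 : 5 * (‖A‖ * δ') ≤ ε ^ 2 / 32 := by
        rw [le_div_iff₀ (by positivity : (0:ℝ) < 160 * (‖A‖ + 1))] at hδ'A
        nlinarith [mul_nonneg hAnn hδ'.le, hδ'.le]
      have h2 : ‖A‖ * ‖d‖ ≤ ‖A‖ * δ' := mul_le_mul_of_nonneg_left hdn.le hAnn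
      have h3 : σ d d ≤ ‖A‖ * δ' := by
        refine le_trans hdd ?_
        nlinarith [norm_nonneg d, mul_nonneg hAnn hδ'.le]
      have h4 : σ u₁ d ≤ 2 * (‖A‖ * δ') := le_trans hcross (by linarith)
      have hδ2 : δ ^ 2 ≤ ε ^ 2 / 64 := by nlinarith [hδ.le, hε.le]
      have hε2 : (0:ℝ) < ε ^ 2 := pow_pos hε 2
      rw [hyeq, hexp, hdu]
      linarith
    have hsy : Real.sqrt (σ y y) < ε / 4 := by
      have : Real.sqrt (σ y y) < Real.sqrt (ε ^ 2 / 16) :=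
        Real.sqrt_lt_sqrt (hσnn y) hσy
      have he : Real.sqrt (ε ^ 2 / 16) = ε / 4 := by
        rw [show ε ^ 2 / 16 = (ε / 4) ^ 2 by ring, Real.sqrt_sq (by positivity)]
      linarith [he ▸ this]
    have hinv4 : ‖y‖⁻¹ < 4 := by
      have := inv_strictAnti₀ (by norm_num : (0:ℝ) < 1/4) hyn
      norm_num at this
      linarith
    refine ⟨‖y‖⁻¹ • y, ⟨‖y‖⁻¹ • v, H.V.smul_mem _ hvV, by rw [map_smul]⟩,
      H.V.smul_mem _ (hAV v hvV), ?_, ?_⟩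
    · rw [norm_smul, Real.norm_eq_abs, abs_of_nonneg (inv_nonneg.2 (norm_nonneg y)),
        inv_mul_cancel₀ (norm_ne_zero_iff.2 hyne)]
    · rw [hσ_smul, Real.sqrt_mul (sq_nonneg _),
        Real.sqrt_sq (inv_nonneg.2 (norm_nonneg y))]
      have := mul_lt_mul'' hinv4 hsy (inv_nonneg.2 (norm_nonneg y)) (Real.sqrt_nonneg _)
      linarith
  choose x hx using fun n : ℕ => key (1 / ((n : ℝ) + 1)) (by positivity)
  refine ⟨x, fun n => ⟨(hx n).1, (hx n).2.1, (hx n).2.2.1⟩, ?_⟩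
  exact squeeze_zero (fun n => Real.sqrt_nonneg _) (fun n => ((hx n).2.2.2).le)
    tendsto_one_div_add_atTop_nhds_zero_nat
end

section
/- Let σ₀ determine a strictly weak, graded Riemannian metric on a Hilbertian H-type group M = V ⊕ W, with associated operator A, and let z ∈ W with z ≠ 0. For any sequence (v_n) in V with |A v_n| = 1 for all n and ‖A v_n‖_{σ₀} → 0, one has J_{Az}(A v_n) ≠ 0 for every n, ‖v_n‖_{σ₀} ≥ 1/‖A v_n‖_{σ₀}, and the quantity Q_n = (1/4) |Az|⁴ ‖v_n‖²_{σ₀} / (‖J_{Az}(A v_n)‖²_{σ₀} ‖z‖²_{σ₀}) tends to +∞ as n → ∞; Q_n is the sectional curvature, computed via Arnold's formula, of the plane spanned by z and J_{Az}(A v_n). -/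
open scoped RealInnerProductSpace

/-- Let `σ₀` determine a strictly weak, graded Riemannian metric on a
Hilbertian H-type group `M = V ⊕ W`, with associated operator `A`, and let `z ∈ W`,
`z ≠ 0`. For a sequence `(v_n)` in `V` with `‖A v_n‖ = 1` and `‖A v_n‖_{σ₀} → 0`, one has
`J_{Az}(A v_n) ≠ 0`, `‖v_n‖_{σ₀} ≥ 1/‖A v_n‖_{σ₀}`, and the sectional curvature
`Q_n = (1/4) ‖Az‖⁴ ‖v_n‖²_{σ₀} / (‖J_{Az}(A v_n)‖²_{σ₀} ‖z‖²_{σ₀})` of the plane spanned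
by `z` and `J_{Az}(A v_n)` tends to `+∞`. -/
theorem statement_19 {M : Type*} [NormedAddCommGroup M] [InnerProductSpace ℝ M]
    [CompleteSpace M] (H : HTypeGroup M) (σ : M → M → ℝ)
    (h_bilin : ∀ v : M, IsLinearMap ℝ (σ v) ∧ IsLinearMap ℝ (fun w => σ w v))
    (h_symm : ∀ v w : M, σ v w = σ w v)
    (h_posdef : ∀ v : M, v ≠ 0 → 0 < σ v v)
    (c₀ : ℝ) (hc₀ : 0 < c₀)
    (h_cont : ∀ v : M, Real.sqrt (σ v v) ≤ c₀ * ‖v‖)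
    (h_graded : ∀ v ∈ H.V, ∀ w ∈ H.W, σ v w = 0)
    (h_strictly_weak : ¬ ∃ c > (0 : ℝ), ∀ v : M, c * ‖v‖ ≤ Real.sqrt (σ v v))
    (A : M →L[ℝ] M) (hA : ∀ v w : M, σ v w = ⟪v, A w⟫)
    (hAV : ∀ v ∈ H.V, A v ∈ H.V) (hAW : ∀ w ∈ H.W, A w ∈ H.W)
    (z : M) (hz : z ∈ H.W) (hz0 : z ≠ 0)
    (v : ℕ → M) (hvV : ∀ n, v n ∈ H.V) (hv1 : ∀ n, ‖A (v n)‖ = 1)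
    (hv0 : Filter.Tendsto (fun n => Real.sqrt (σ (A (v n)) (A (v n)))) Filter.atTop (nhds 0)) :
    (∀ n, H.Jmap (A z) (A (v n)) ≠ 0) ∧
    (∀ n, 1 / Real.sqrt (σ (A (v n)) (A (v n))) ≤ Real.sqrt (σ (v n) (v n))) ∧
    Filter.Tendsto
      (fun n => (1 / 4 : ℝ) * ‖A z‖ ^ 4 * σ (v n) (v n) /
        (σ (H.Jmap (A z) (A (v n))) (H.Jmap (A z) (A (v n))) * σ z z))
      Filter.atTop Filter.atTop := by

  classical
  have hAz : A z ≠ 0 := by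
    intro h
    have h0 : σ z z = 0 := by rw [hA, h, inner_zero_right]
    exact absurd h0 (ne_of_gt (h_posdef z hz0))
  have hAzpos : (0:ℝ) < ‖A z‖ := norm_pos_iff.mpr hAz
  have hAvV : ∀ n, A (v n) ∈ H.V := fun n => hAV _ (hvV n)
  have hAzW : A z ∈ H.W := hAW z hz
  have hσnn : ∀ x : M, 0 ≤ σ x x := by
    intro x
    rcases eq_or_ne x 0 with h | h
    · rw [h, hA]; simp
    · exact (h_posdef x h).le
  -- skewness of J on V
  have hJskew : ∀ w ∈ H.W, ∀ a ∈ H.V, ∀ b ∈ H.V,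
      ⟪H.Jmap w a, b⟫ = -⟪H.Jmap w b, a⟫ := by
    intro w hw a ha b hb
    rw [H.Jmap_inner w hw a ha b hb, H.Jmap_inner w hw b hb a ha,
      H.bracket_skew a b, inner_neg_right]
  -- norm of J
  have hJnormsq : ∀ w ∈ H.W, ∀ x ∈ H.V, ‖H.Jmap w x‖ ^ 2 = ‖w‖ ^ 2 * ‖x‖ ^ 2 := by
    intro w hw x hx
    have hJx : H.Jmap w x ∈ H.V := H.Jmap_mem_V w hw x hx
    have h1 : ⟪H.Jmap w (H.Jmap w x), x⟫ = -⟪H.Jmap w x, H.Jmap w x⟫ :=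
      hJskew w hw (H.Jmap w x) hJx x hx
    rw [H.Jmap_sq w hw x hx, real_inner_smul_left] at h1
    have h2 : ⟪H.Jmap w x, H.Jmap w x⟫ = ‖H.Jmap w x‖ ^ 2 := real_inner_self_eq_norm_sq _
    have h3 : ⟪x, x⟫ = ‖x‖ ^ 2 := real_inner_self_eq_norm_sq _
    rw [h2, h3] at h1
    linarith
  -- Cauchy-Schwarz for σ
  have expand : ∀ x y : M, ∀ t : ℝ, σ (x + t • y) (x + t • y) =
      σ y y * t * t + (2 * σ x y) * t + σ x x := by
    intro x y t
    have hsym : (⟪y, A x⟫ : ℝ) = ⟪x, A y⟫ := by rw [← hA, ← hA, h_symm]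
    simp only [hA, map_add, map_smul, inner_add_left, inner_add_right,
      real_inner_smul_left, real_inner_smul_right]
    rw [hsym]; ring
  have hCS : ∀ x y : M, σ x y ^ 2 ≤ σ x x * σ y y := by
    intro x y
    have h := discrim_le_zero (a := σ y y) (b := 2 * σ x y) (c := σ x x) ?_
    · rw [discrim] at h; nlinarith
    · intro t
      have h0 := hσnn (x + t • y)
      rw [expand x y t] at h0
      nlinarith [h0]
  have hAvn0 : ∀ n, A (v n) ≠ 0 := by
    intro n h
    have h1 := hv1 n
    rw [h, norm_zero] at h1
    norm_num at h1
  have hs_pos : ∀ n, 0 < σ (A (v n)) (A (v n)) := fun n => h_posdef _ (hAvn0 n)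
  have ht_pos : ∀ n, 0 < σ (v n) (v n) := by
    intro n
    refine h_posdef _ (fun h => hAvn0 n ?_)
    rw [h, map_zero]
  have hst : ∀ n, 1 ≤ σ (A (v n)) (A (v n)) * σ (v n) (v n) := by
    intro n
    have h1 : σ (A (v n)) (v n) = 1 := by
      rw [hA, real_inner_self_eq_norm_sq, hv1 n, one_pow]
    have h2 := hCS (A (v n)) (v n)
    nlinarith
  -- part 1
  have hJne : ∀ n, H.Jmap (A z) (A (v n)) ≠ 0 := by
    intro n h
    have h1 := hJnormsq (A z) hAzW (A (v n)) (hAvV n)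
    rw [h, norm_zero, hv1 n] at h1
    nlinarith
  -- part 2
  have part2 : ∀ n, 1 / Real.sqrt (σ (A (v n)) (A (v n))) ≤ Real.sqrt (σ (v n) (v n)) := by
    intro n
    rw [div_le_iff₀ (Real.sqrt_pos.mpr (hs_pos n)), ← Real.sqrt_mul (hσnn (v n))]
    rw [show (1:ℝ) = Real.sqrt 1 from (Real.sqrt_one).symm]
    apply Real.sqrt_le_sqrt
    nlinarith [hst n]
  refine ⟨hJne, part2, ?_⟩
  -- part 3
  have hσz : 0 < σ z z := h_posdef z hz0
  have hJbound : ∀ n, σ (H.Jmap (A z) (A (v n))) (H.Jmap (A z) (A (v n))) ≤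
      c₀ ^ 2 * ‖A z‖ ^ 2 := by
    intro n
    set J := H.Jmap (A z) (A (v n)) with hJ
    have h1 := h_cont J
    have h2 : ‖J‖ ^ 2 = ‖A z‖ ^ 2 := by
      rw [hJ, hJnormsq (A z) hAzW (A (v n)) (hAvV n), hv1 n]; ring
    have h3 : Real.sqrt (σ J J) ^ 2 = σ J J := Real.sq_sqrt (hσnn J)
    nlinarith [Real.sqrt_nonneg (σ J J), norm_nonneg J]
  set L := (1/4 : ℝ) * ‖A z‖ ^ 4 / (c₀ ^ 2 * ‖A z‖ ^ 2 * σ z z) with hL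
  have hLpos : 0 < L :=
    div_pos (mul_pos (by norm_num) (pow_pos hAzpos 4))
      (mul_pos (mul_pos (pow_pos hc₀ 2) (pow_pos hAzpos 2)) hσz)
  have hlow : ∀ n, L * σ (v n) (v n) ≤
      (1 / 4 : ℝ) * ‖A z‖ ^ 4 * σ (v n) (v n) /
        (σ (H.Jmap (A z) (A (v n))) (H.Jmap (A z) (A (v n))) * σ z z) := by
    intro n
    have hd1 : 0 < σ (H.Jmap (A z) (A (v n))) (H.Jmap (A z) (A (v n))) * σ z z :=
      mul_pos (h_posdef _ (hJne n)) hσz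
    have hd2 : σ (H.Jmap (A z) (A (v n))) (H.Jmap (A z) (A (v n))) * σ z z ≤
        c₀ ^ 2 * ‖A z‖ ^ 2 * σ z z :=
      mul_le_mul_of_nonneg_right (hJbound n) hσz.le
    have hnum : 0 ≤ (1 / 4 : ℝ) * ‖A z‖ ^ 4 * σ (v n) (v n) := by
      have := hσnn (v n); positivity
    have h4 : L * σ (v n) (v n) =
        (1 / 4 : ℝ) * ‖A z‖ ^ 4 * σ (v n) (v n) / (c₀ ^ 2 * ‖A z‖ ^ 2 * σ z z) := by
      rw [hL]; ring
    rw [h4]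
    exact div_le_div_of_nonneg_left hnum hd1 hd2
  have hs0 : Filter.Tendsto (fun n => σ (A (v n)) (A (v n))) Filter.atTop (nhds 0) := by
    have h2 : Filter.Tendsto
        (fun n => Real.sqrt (σ (A (v n)) (A (v n))) * Real.sqrt (σ (A (v n)) (A (v n))))
        Filter.atTop (nhds 0) := by simpa using hv0.mul hv0
    exact h2.congr (fun n => Real.mul_self_sqrt (hσnn _))
  have hinv : Filter.Tendsto (fun n => (σ (A (v n)) (A (v n)))⁻¹) Filter.atTop Filter.atTop := by
    apply Filter.Tendsto.inv_tendsto_nhdsGT_zero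
    apply tendsto_nhdsWithin_of_tendsto_nhds_of_eventually_within _ hs0
    exact Filter.Eventually.of_forall (fun n => hs_pos n)
  have ht_top : Filter.Tendsto (fun n => σ (v n) (v n)) Filter.atTop Filter.atTop := by
    apply Filter.tendsto_atTop_mono _ hinv
    intro n
    rw [inv_eq_one_div, div_le_iff₀ (hs_pos n)]
    nlinarith [hst n]
  exact Filter.tendsto_atTop_mono hlow (Filter.Tendsto.const_mul_atTop hLpos ht_top)
end
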